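/- Centralized lower bound for p ≥ 2: for any estimator p̂ based on N = mn i.i.d. samples from an unknown distribution on a set of size k ≥ 2, the worst-case risk satisfies sup_{p_W} E[‖p̂ - p_W‖_p^p] ≥ c · N^{-p/2} for a universal constant c > 0 (depending only on p). -/
import Mathlib

open MeasureTheory

lemma aux_sum_prod {W : Type} [Fintype W] [DecidableEq W] (N : ℕ) (g : W → ℝ) :
    ∑ f : Fin N → W, ∏ j, g (f j) = (∑ w, g w) ^ N := by
  rw [Finset.sum_pow' Finset.univ g N, Fintype.piFinset_univ]

lemma aux_two_point (p : ℝ) (hp : 1 ≤ p) (x a b : ℝ) :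
    2 * (|a - b| / 2) ^ p ≤ |x - a| ^ p + |x - b| ^ p := by
  have hp0 : (0:ℝ) ≤ p := by linarith
  have hcv := (convexOn_rpow hp).2 (Set.mem_Ici.2 (abs_nonneg (x - a)))
      (Set.mem_Ici.2 (abs_nonneg (x - b))) (by norm_num : (0:ℝ) ≤ 1/2)
      (by norm_num : (0:ℝ) ≤ 1/2) (by norm_num)
  simp only [smul_eq_mul] at hcv
  have h1 : |a - b| / 2 ≤ (1/2) * |x - a| + (1/2) * |x - b| := by
    have h2 : |a - b| ≤ |x - a| + |x - b| := by
      have h3 : a - b = (x - b) - (x - a) := by ring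
      rw [h3]
      calc |(x - b) - (x - a)| ≤ |x - b| + |x - a| := abs_sub _ _
        _ = |x - a| + |x - b| := by ring
    linarith
  have h4 : (|a - b| / 2) ^ p ≤ ((1/2) * |x - a| + (1/2) * |x - b|) ^ p :=
    Real.rpow_le_rpow (div_nonneg (abs_nonneg _) (by norm_num)) h1 hp0
  calc 2 * (|a - b| / 2) ^ p ≤ 2 * (1/2 * |x - a| ^ p + 1/2 * |x - b| ^ p) := by
        refine mul_le_mul_of_nonneg_left (h4.trans hcv) (by norm_num)
    _ = |x - a| ^ p + |x - b| ^ p := by ring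

set_option maxHeartbeats 1000000 in
theorem stmt_10 (p : ℝ) (hp : 2 ≤ p) :
    ∃ c : ℝ, 0 < c ∧
      ∀ (W : Type) [Fintype W] [DecidableEq W], 2 ≤ Fintype.card W →
      ∀ (N : ℕ), 1 ≤ N →
      ∀ (Ω : Type) [MeasurableSpace Ω] (μ : Measure Ω) [IsProbabilityMeasure μ]
        (est : Ω → (Fin N → W) → W → ℝ),
        (∀ f w, Measurable (fun ω => est ω f w)) →
        (∀ ω f, (∀ w, 0 ≤ est ω f w) ∧ ∑ w, est ω f w ≤ 1) →
        ∃ q : W → ℝ, (∀ w, 0 ≤ q w) ∧ ∑ w, q w = 1 ∧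
          c * (N : ℝ) ^ (-(p / 2)) ≤
            ∫ ω, ∑ f : Fin N → W, (∏ j, q (f j)) * ∑ w, |est ω f w - q w| ^ p ∂μ := by
  have hp1 : (1:ℝ) ≤ p := by linarith
  have hp0 : (0:ℝ) ≤ p := by linarith
  refine ⟨(8:ℝ) ^ (-(p/2)) / 4, by positivity, ?_⟩
  intro W _ _ hk N hN Ω _ μ _ est hmeas hest
  obtain ⟨w0, w1, hww⟩ := Fintype.exists_pair_of_one_lt_card (by omega : 1 < Fintype.card W)
  set Nr : ℝ := (N : ℝ) with hNrdef
  have hNr1 : (1:ℝ) ≤ Nr := by rw [hNrdef]; exact_mod_cast hN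
  have hNpos : (0:ℝ) < Nr := by linarith
  set ε : ℝ := Real.sqrt ((8 * Nr)⁻¹) with hεdef
  have hε2 : ε ^ 2 = (8 * Nr)⁻¹ := Real.sq_sqrt (by positivity)
  have hεpos : 0 < ε := Real.sqrt_pos.2 (by positivity)
  have hε2le : ε ^ 2 ≤ 1/8 := by
    rw [hε2]
    rw [inv_le_comm₀ (by linarith) (by norm_num)]
    linarith
  have hεle : ε ≤ 1/2 := by nlinarith
  set a : ℝ := 1/2 + ε with hadef
  set b : ℝ := 1/2 - ε with hbdef
  have ha0 : 0 ≤ a := by simp [hadef]; linarith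
  have hb0 : 0 ≤ b := by simp [hbdef]; linarith
  have ha1 : a ≤ 1 := by simp [hadef]; linarith
  have hb1 : b ≤ 1 := by simp [hbdef]; linarith
  set q0 : W → ℝ := fun w => (if w = w0 then a else 0) + (if w = w1 then b else 0) with hq0def
  set q1 : W → ℝ := fun w => (if w = w0 then b else 0) + (if w = w1 then a else 0) with hq1def
  have hq0nn : ∀ w, 0 ≤ q0 w := by
    intro w; simp only [hq0def]
    positivity
  have hq1nn : ∀ w, 0 ≤ q1 w := by
    intro w; simp only [hq1def]
    positivity
  have hq0le1 : ∀ w, q0 w ≤ 1 := by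
    intro w
    by_cases h0 : w = w0
    · subst h0; simp [hq0def, hww]; exact ha1
    · by_cases h1 : w = w1
      · subst h1; simp [hq0def, h0]; exact hb1
      · simp [hq0def, h0, h1]
  have hq1le1 : ∀ w, q1 w ≤ 1 := by
    intro w
    by_cases h0 : w = w0
    · subst h0; simp [hq1def, hww]; exact hb1
    · by_cases h1 : w = w1
      · subst h1; simp [hq1def, h0]; exact ha1
      · simp [hq1def, h0, h1]
  have hsum0 : ∑ w, q0 w = 1 := by
    simp only [hq0def]
    rw [Finset.sum_add_distrib, Finset.sum_ite_eq' Finset.univ w0 (fun _ => a),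
      Finset.sum_ite_eq' Finset.univ w1 (fun _ => b)]
    simp only [Finset.mem_univ, if_true]
    rw [hadef, hbdef]; ring
  have hsum1 : ∑ w, q1 w = 1 := by
    simp only [hq1def]
    rw [Finset.sum_add_distrib, Finset.sum_ite_eq' Finset.univ w0 (fun _ => b),
      Finset.sum_ite_eq' Finset.univ w1 (fun _ => a)]
    simp only [Finset.mem_univ, if_true]
    rw [hadef, hbdef]; ring
  have hq0w0 : q0 w0 = a := by simp [hq0def, hww]
  have hq1w0 : q1 w0 = b := by simp [hq1def, hww]
  set P0 : (Fin N → W) → ℝ := fun f => ∏ j, q0 (f j) with hP0def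
  set P1 : (Fin N → W) → ℝ := fun f => ∏ j, q1 (f j) with hP1def
  have hP0nn : ∀ f, 0 ≤ P0 f := fun f => Finset.prod_nonneg fun j _ => hq0nn _
  have hP1nn : ∀ f, 0 ≤ P1 f := fun f => Finset.prod_nonneg fun j _ => hq1nn _
  have hP0sum : ∑ f : Fin N → W, P0 f = 1 := by
    rw [hP0def]; rw [aux_sum_prod N q0, hsum0, one_pow]
  have hP1sum : ∑ f : Fin N → W, P1 f = 1 := by
    rw [hP1def]; rw [aux_sum_prod N q1, hsum1, one_pow]
  set s : ℝ := Real.sqrt (a * b) with hsdef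
  have hs0 : 0 ≤ s := Real.sqrt_nonneg _
  have hr : ∀ w, Real.sqrt (q0 w * q1 w)
      = (if w = w0 then s else 0) + (if w = w1 then s else 0) := by
    intro w
    by_cases h0 : w = w0
    · subst h0
      simp [hq0def, hq1def, hww, hsdef]
    · by_cases h1 : w = w1
      · subst h1
        simp [hq0def, hq1def, h0, hsdef, mul_comm b a]
      · simp [hq0def, hq1def, h0, h1]
  have hrsum : ∑ w, Real.sqrt (q0 w * q1 w) = 2 * s := by
    simp only [hr]
    rw [Finset.sum_add_distrib, Finset.sum_ite_eq' Finset.univ w0 (fun _ => s),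
      Finset.sum_ite_eq' Finset.univ w1 (fun _ => s)]
    simp; ring
  have hs2 : (2 * s) ^ 2 = 1 - 4 * ε ^ 2 := by
    have habs : s ^ 2 = a * b := Real.sq_sqrt (mul_nonneg ha0 hb0)
    have hab : a * b = 1/4 - ε ^ 2 := by rw [hadef, hbdef]; ring
    have h4 : (2 * s) ^ 2 = 4 * s ^ 2 := by ring
    rw [h4, habs, hab]; ring
  have hBC : ∑ f : Fin N → W, Real.sqrt (P0 f * P1 f) = (2 * s) ^ N := by
    have hpt : ∀ f : Fin N → W,
        Real.sqrt (P0 f * P1 f) = ∏ j, Real.sqrt (q0 (f j) * q1 (f j)) := by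
      intro f
      rw [hP0def, hP1def]
      simp only
      rw [← Finset.prod_mul_distrib]
      rw [Real.sqrt_eq_rpow, ← Real.finset_prod_rpow _ _
        (fun j _ => mul_nonneg (hq0nn _) (hq1nn _)) _]
      simp [Real.sqrt_eq_rpow]
    simp only [hpt]
    rw [aux_sum_prod N (fun w => Real.sqrt (q0 w * q1 w)), hrsum]
  set m : (Fin N → W) → ℝ := fun f => min (P0 f) (P1 f) with hmdef
  have hmnn : ∀ f, 0 ≤ m f := fun f => le_min (hP0nn f) (hP1nn f)
  have hCS : ((2 * s) ^ N) ^ 2 ≤ (∑ f : Fin N → W, m f) * 2 := by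
    have h1 := Finset.sum_mul_sq_le_sq_mul_sq Finset.univ
      (fun f : Fin N → W => Real.sqrt (m f))
      (fun f : Fin N → W => Real.sqrt (max (P0 f) (P1 f)))
    have h2 : ∀ f : Fin N → W, Real.sqrt (m f) * Real.sqrt (max (P0 f) (P1 f))
        = Real.sqrt (P0 f * P1 f) := by
      intro f
      rw [← Real.sqrt_mul (hmnn f), hmdef]
      simp only
      rw [min_mul_max]
    have h3 : ∀ f : Fin N → W, Real.sqrt (m f) ^ 2 = m f :=
      fun f => Real.sq_sqrt (hmnn f)
    have h4 : ∀ f : Fin N → W, Real.sqrt (max (P0 f) (P1 f)) ^ 2 = max (P0 f) (P1 f) :=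
      fun f => Real.sq_sqrt (le_max_of_le_left (hP0nn f))
    simp only [h2, h3, h4, hBC] at h1
    have h5 : ∑ f : Fin N → W, max (P0 f) (P1 f) ≤ 2 := by
      calc ∑ f : Fin N → W, max (P0 f) (P1 f)
          ≤ ∑ f : Fin N → W, (P0 f + P1 f) :=
            Finset.sum_le_sum fun f _ => max_le_add_of_nonneg (hP0nn f) (hP1nn f)
        _ = 2 := by rw [Finset.sum_add_distrib, hP0sum, hP1sum]; norm_num
    have h6 : 0 ≤ ∑ f : Fin N → W, m f :=
      Finset.sum_nonneg fun f _ => hmnn f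
    nlinarith
  have hbern : (1:ℝ)/2 ≤ ((2 * s) ^ N) ^ 2 := by
    have he : ((2 * s) ^ N) ^ 2 = ((2 * s) ^ 2) ^ N := by
      rw [← pow_mul, ← pow_mul, mul_comm N 2]
    rw [he, hs2]
    have hB := one_add_mul_le_pow (a := -(4 * ε ^ 2)) (by linarith [hε2le]) N
    have hNε : Nr * (4 * ε ^ 2) = 1/2 := by
      rw [hε2]; field_simp; ring
    have : (1:ℝ) + (N:ℕ) * -(4 * ε ^ 2) = 1/2 := by
      push_cast
      rw [hNrdef] at hNε
      linarith [hNε]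
    calc (1:ℝ)/2 = 1 + (N:ℕ) * -(4 * ε ^ 2) := this.symm
      _ ≤ (1 + -(4 * ε ^ 2)) ^ N := hB
      _ = (1 - 4 * ε ^ 2) ^ N := by ring_nf
  have hmge : (1:ℝ)/4 ≤ ∑ f : Fin N → W, m f := by linarith [hbern, hCS]
  -- loss functions
  set L0 : Ω → (Fin N → W) → ℝ := fun ω f => ∑ w, |est ω f w - q0 w| ^ p with hL0def
  set L1 : Ω → (Fin N → W) → ℝ := fun ω f => ∑ w, |est ω f w - q1 w| ^ p with hL1def
  set g0 : Ω → ℝ := fun ω => ∑ f : Fin N → W, P0 f * L0 ω f with hg0def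
  set g1 : Ω → ℝ := fun ω => ∑ f : Fin N → W, P1 f * L1 ω f with hg1def
  have hLnn : ∀ ω f, 0 ≤ L0 ω f ∧ 0 ≤ L1 ω f := by
    intro ω f
    constructor <;> exact Finset.sum_nonneg fun w _ => Real.rpow_nonneg (abs_nonneg _) _
  have hεp : 0 < ε ^ p := Real.rpow_pos_of_pos hεpos p
  have hpt : ∀ ω, ε ^ p / 2 ≤ g0 ω + g1 ω := by
    intro ω
    have hterm : ∀ f : Fin N → W, m f * (2 * ε ^ p) ≤ P0 f * L0 ω f + P1 f * L1 ω f := by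
      intro f
      have h1 : |est ω f w0 - q0 w0| ^ p ≤ L0 ω f :=
        Finset.single_le_sum (f := fun w => |est ω f w - q0 w| ^ p)
          (fun w _ => Real.rpow_nonneg (abs_nonneg _) _) (Finset.mem_univ w0)
      have h2 : |est ω f w0 - q1 w0| ^ p ≤ L1 ω f :=
        Finset.single_le_sum (f := fun w => |est ω f w - q1 w| ^ p)
          (fun w _ => Real.rpow_nonneg (abs_nonneg _) _) (Finset.mem_univ w0)
      have hkey := aux_two_point p hp1 (est ω f w0) a b
      have habd : |a - b| / 2 = ε := by
        rw [hadef, hbdef]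
        rw [abs_of_nonneg (by linarith)]
        ring
      rw [habd] at hkey
      have h5 : 2 * ε ^ p ≤ L0 ω f + L1 ω f := by
        rw [hq0w0] at h1; rw [hq1w0] at h2
        linarith
      calc m f * (2 * ε ^ p) ≤ m f * (L0 ω f + L1 ω f) :=
            mul_le_mul_of_nonneg_left h5 (hmnn f)
        _ = m f * L0 ω f + m f * L1 ω f := by ring
        _ ≤ P0 f * L0 ω f + P1 f * L1 ω f :=
            add_le_add (mul_le_mul_of_nonneg_right (min_le_left _ _) (hLnn ω f).1)
              (mul_le_mul_of_nonneg_right (min_le_right _ _) (hLnn ω f).2)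
    have hsum := Finset.sum_le_sum fun f (_ : f ∈ Finset.univ) => hterm f
    rw [← Finset.sum_mul] at hsum
    have hlhs : ε ^ p / 2 ≤ (∑ f : Fin N → W, m f) * (2 * ε ^ p) := by
      calc ε ^ p / 2 = (1/4) * (2 * ε ^ p) := by ring
        _ ≤ (∑ f : Fin N → W, m f) * (2 * ε ^ p) := by
            apply mul_le_mul_of_nonneg_right hmge
            positivity
    rw [Finset.sum_add_distrib] at hsum
    calc ε ^ p / 2 ≤ (∑ f : Fin N → W, m f) * (2 * ε ^ p) := hlhs
      _ ≤ _ := hsum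
  -- bounds and measurability
  have hb01 : ∀ ω f w (q : W → ℝ), (∀ w, 0 ≤ q w) → (∀ w, q w ≤ 1) →
      |est ω f w - q w| ^ p ≤ 1 := by
    intro ω f w q hqn hql
    apply Real.rpow_le_one (abs_nonneg _) _ hp0
    have h1 : 0 ≤ est ω f w := (hest ω f).1 w
    have h2 : est ω f w ≤ 1 :=
      le_trans (Finset.single_le_sum (fun w _ => (hest ω f).1 w) (Finset.mem_univ w))
        (hest ω f).2
    rw [abs_le]
    constructor <;> [linarith [hql w]; linarith [hqn w]]
  have hmeasg : ∀ (q : W → ℝ),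
      Measurable (fun ω => ∑ f : Fin N → W, (∏ j, q (f j)) * ∑ w, |est ω f w - q w| ^ p) := by
    intro q
    apply Finset.measurable_sum
    intro f _
    apply Measurable.const_mul
    apply Finset.measurable_sum
    intro w _
    exact (Real.continuous_rpow_const hp0).measurable.comp ((hmeas f w).sub measurable_const).abs
  have hintg : ∀ (q : W → ℝ), (∀ w, 0 ≤ q w) → (∀ w, q w ≤ 1) → (∑ w, q w = 1) →
      Integrable (fun ω => ∑ f : Fin N → W, (∏ j, q (f j)) * ∑ w, |est ω f w - q w| ^ p) μ := by
    intro q hqn hql hqs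
    refine Integrable.mono' (integrable_const ((Fintype.card W : ℝ)))
      (hmeasg q).aestronglyMeasurable (ae_of_all μ fun ω => ?_)
    rw [Real.norm_eq_abs, abs_of_nonneg]
    · calc ∑ f : Fin N → W, (∏ j, q (f j)) * ∑ w, |est ω f w - q w| ^ p
          ≤ ∑ f : Fin N → W, (∏ j, q (f j)) * (Fintype.card W : ℝ) := by
            apply Finset.sum_le_sum
            intro f _
            apply mul_le_mul_of_nonneg_left _ (Finset.prod_nonneg fun j _ => hqn _)
            calc ∑ w, |est ω f w - q w| ^ p ≤ ∑ w : W, (1:ℝ) :=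
                  Finset.sum_le_sum fun w _ => hb01 ω f w q hqn hql
              _ = (Fintype.card W : ℝ) := by simp
        _ = (Fintype.card W : ℝ) := by
            rw [← Finset.sum_mul, aux_sum_prod N q, hqs, one_pow, one_mul]
    · exact Finset.sum_nonneg fun f _ =>
        mul_nonneg (Finset.prod_nonneg fun j _ => hqn _)
          (Finset.sum_nonneg fun w _ => Real.rpow_nonneg (abs_nonneg _) _)
  have hint0 : Integrable g0 μ := hintg q0 hq0nn hq0le1 hsum0
  have hint1 : Integrable g1 μ := hintg q1 hq1nn hq1le1 hsum1
  have hI : ε ^ p / 2 ≤ (∫ ω, g0 ω ∂μ) + ∫ ω, g1 ω ∂μ := by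
    rw [← integral_add hint0 hint1]
    calc ε ^ p / 2 = ∫ _ω, (ε ^ p / 2 : ℝ) ∂μ := by simp
      _ ≤ ∫ ω, (g0 ω + g1 ω) ∂μ :=
          integral_mono (integrable_const _) (hint0.add hint1) hpt
  have hc : (8:ℝ) ^ (-(p/2)) / 4 * Nr ^ (-(p/2)) = ε ^ p / 4 := by
    have hεp8N : ε ^ p = (8 * Nr) ^ (-(p/2)) := by
      rw [hεdef, Real.sqrt_eq_rpow, ← Real.rpow_mul (by positivity),
        Real.inv_rpow (by positivity), ← Real.rpow_neg (by positivity)]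
      congr 1
      ring
    rw [hεp8N, Real.mul_rpow (by norm_num : (0:ℝ) ≤ 8) hNpos.le]
    ring
  by_cases hcase : ε ^ p / 4 ≤ ∫ ω, g0 ω ∂μ
  · refine ⟨q0, hq0nn, hsum0, ?_⟩
    calc (8:ℝ) ^ (-(p/2)) / 4 * Nr ^ (-(p/2)) = ε ^ p / 4 := hc
      _ ≤ ∫ ω, g0 ω ∂μ := hcase
      _ = _ := by rw [hg0def]
  · refine ⟨q1, hq1nn, hsum1, ?_⟩
    have hcase1 : ε ^ p / 4 ≤ ∫ ω, g1 ω ∂μ := by linarith [hI]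
    calc (8:ℝ) ^ (-(p/2)) / 4 * Nr ^ (-(p/2)) = ε ^ p / 4 := hc
      _ ≤ ∫ ω, g1 ω ∂μ := hcase1
      _ = _ := by rw [hg1def]
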